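/- Let Γ be a nonempty finite set and N a quadratic normalisation on Γ satisfying Conditions (unit) and (home). Then the monoid S¹ presented by (Γ,N) is residually finite: for any two distinct elements x, y of S¹ there exist a finite monoid F and a monoid homomorphism f : S¹ → F with f(x) ≠ f(y). -/

import Mathlib

/-!
Every element of `S¹` has a canonical representative: the `N`-normal form of any word representing
it, stripped of its leading `𝟙`s. Since `N [x, 𝟙] = [𝟙, x]`, the letter `𝟙` occurs in a normal
word only in a leading block, so this representative is `𝟙`-free. Condition (home) makes the
normalisation of `v ++ [a]`, for `v` normal, a single right-to-left sweep of two-letter steps; hence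
the last `n` letters of the normal form of `v ++ [a]` depend only on the last `n` letters of `v`.
Truncating canonical representatives to their last `n` letters is therefore compatible with right
multiplication, and `S¹` acts on the finitely many truncated representatives. Taking `n` at least
the length of the representatives of `x` and `y` separates them.
-/

namespace Stmt5

variable {α : Type}

/-- Apply the two-letter normalisation `nf` at (1-indexed) position `i` of a word. -/
def applyAtL (nf : α → α → List α) : ℕ → List α → List α
  | 1, x :: y :: s => nf x y ++ s
  | n + 2, x :: s => x :: applyAtL nf (n + 1) s
  | _, w => w

/-- Apply the two-letter normalisation along a finite sequence of positions
(the first position in the list is applied first). -/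
def seqApplyL (nf : α → α → List α) (l : List ℕ) (w : List α) : List α :=
  l.foldl (fun w i => applyAtL nf i w) w

/-- The defining relations of the monoid `S¹`: all pairs `(w, N w)` for nonempty `w`,
together with the pair `([𝟙], ε)`. -/
def presRel (N : List α → List α) (e : α) : FreeMonoid α → FreeMonoid α → Prop :=
  fun x y =>
    (FreeMonoid.toList x ≠ [] ∧ FreeMonoid.toList y = N (FreeMonoid.toList x)) ∨
      (FreeMonoid.toList x = [e] ∧ FreeMonoid.toList y = [])

/-- A monoid `M` is residually finite if distinct elements can be separated by a
homomorphism to a finite monoid. -/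
def ResiduallyFinite (M : Type) [Monoid M] : Prop :=
  ∀ x y : M, x ≠ y →
    ∃ (F : Type) (mF : Monoid F)
      (f : @MonoidHom M F MulOneClass.toMulOne mF.toMulOneClass.toMulOne),
      Finite F ∧ f x ≠ f y

end Stmt5

namespace List

variable {β : Type} {l : List β} {n : ℕ}

theorem rtake_of_length_le (h : l.length ≤ n) : l.rtake n = l := by
  rw [rtake, Nat.sub_eq_zero_of_le h, drop_zero]

theorem rtake_append_length (l r : List β) : (l ++ r).rtake r.length = r := by
  rw [rtake, length_append, Nat.add_sub_cancel, drop_left]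

theorem rtake_append_of_le_length (l : List β) {r : List β} (h : n ≤ r.length) :
    (l ++ r).rtake n = r.rtake n := by
  rw [rtake, rtake, length_append,
    show l.length + r.length - n = l.length + (r.length - n) by omega, drop_length_add_append]

theorem length_rtake_of_le_length (h : n ≤ l.length) : (l.rtake n).length = n := by
  rw [rtake, length_drop]
  omega

theorem length_rtake_le (l : List β) (n : ℕ) : (l.rtake n).length ≤ n := by
  rw [rtake, length_drop]
  omega

section DropWhile

variable [DecidableEq β] {a : β}

theorem dropWhile_beq_of_not_mem {l : List β} (h : a ∉ l) : l.dropWhile (· == a) = l :=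
  dropWhile_beq_eq_self_of_head?_ne fun h' => h (mem_of_head? h')

theorem rtake_dropWhile_append {X r : List β} (h : a ∉ (X ++ r).dropWhile (· == a)) :
    ((X ++ r).dropWhile (· == a)).rtake r.length = r.dropWhile (· == a) := by
  induction X with
  | nil => exact rtake_of_length_le ((dropWhile_suffix _).length_le)
  | cons x X ih =>
    by_cases hx : x = a
    · simpa [hx] using ih (by simpa [hx] using h)
    · have hr : a ∉ r := fun hr => h (by simp [hx, hr])
      rw [dropWhile_beq_of_not_mem hr, cons_append, dropWhile_cons_of_neg (by simpa using hx),
        ← cons_append, rtake_append_length]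

theorem rtake_dropWhile (h : a ∉ l.dropWhile (· == a))
    (hn : n ≤ l.length) : (l.dropWhile (· == a)).rtake n = (l.rtake n).dropWhile (· == a) := by
  obtain ⟨X, r, rfl, rfl⟩ : ∃ X r, l = X ++ r ∧ n = r.length :=
    ⟨_, _, (take_append_drop (l.length - n) l).symm, (length_rtake_of_le_length hn).symm⟩
  rw [rtake_append_length]
  exact rtake_dropWhile_append h

end DropWhile

end List

namespace Stmt5

section FiniteRetraction

variable {Γ : Type} (T : List Γ → List Γ)

def rangeAction (w : List Γ) (q : Set.range T) : Set.range T := ⟨T (q.1 ++ w), _, rfl⟩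

variable {T}

def rangeActionHom (hT : ∀ u w, T (T u ++ w) = T (u ++ w)) :
    FreeMonoid Γ →* (Function.End (Set.range T))ᵐᵒᵖ where
  toFun w := .op (rangeAction T w.toList)
  map_one' := congrArg MulOpposite.op <| funext fun ⟨_, u, rfl⟩ => Subtype.ext <| by
    change T (T u ++ []) = T u
    simpa using hT u []
  map_mul' a b := congrArg MulOpposite.op <| funext fun q => Subtype.ext <| by
    change T (q.1 ++ (a.toList ++ b.toList)) = T (T (q.1 ++ a.toList) ++ b.toList)
    rw [hT, List.append_assoc]

theorem residuallyFinite_conGen_of_finite_retractions {r : FreeMonoid Γ → FreeMonoid Γ → Prop}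
    (h : ∀ u v : FreeMonoid Γ, ¬conGen r u v → ∃ T : List Γ → List Γ,
      (Set.range T).Finite ∧ (∀ u w, T (T u ++ w) = T (u ++ w)) ∧
      (∀ x y, r x y → ∀ u, T (u ++ x.toList) = T (u ++ y.toList)) ∧ T u.toList ≠ T v.toList) :
    ResiduallyFinite (conGen r).Quotient := by
  intro x y hxy
  obtain ⟨u, rfl⟩ := Con.mk'_surjective x
  obtain ⟨v, rfl⟩ := Con.mk'_surjective y
  obtain ⟨T, hfin, hT, hr, huv⟩ := h u v fun huv => hxy ((Con.eq _).2 huv)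
  have := hfin.to_subtype
  have : Finite (Function.End (Set.range T)) := inferInstanceAs (Finite (_ → _))
  have hker : conGen r ≤ Con.ker (rangeActionHom hT) := Con.conGen_le.2 fun x y hxy =>
    (Con.ker_rel _).2 (congrArg MulOpposite.op (funext fun q => Subtype.ext (hr x y hxy q.1)))
  refine ⟨_, inferInstance, (conGen r).lift _ hker, Finite.of_equiv _ MulOpposite.opEquiv,
    fun hρ => huv ?_⟩
  have : T (T [] ++ u.toList) = T (T [] ++ v.toList) :=
    congrArg (fun f => (f.unop ⟨T [], [], rfl⟩).1) hρ
  simpa only [hT, List.nil_append] using this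

end FiniteRetraction

section Normalisation

variable {Γ : Type}

structure IsHomeNormalisation (N : List Γ → List Γ) (e : Γ) : Prop where
  length_eq : ∀ w, (N w).length = w.length
  singleton : ∀ x, N [x] = [x]
  absorb : ∀ u w v, w ≠ [] → N (u ++ N w ++ v) = N (u ++ w ++ v)
  eq_self_iff : ∀ w, w ≠ [] → (N w = w ↔ w.IsChain fun x y => N [x, y] = [x, y])
  unit : ∀ w, w ≠ [] → N (e :: w) = e :: N w ∧ N (w ++ [e]) = e :: N w
  home : ∀ x y z, N [x, y, z] = seqApplyL (fun a b => N [a, b]) [1, 2, 1] [x, y, z]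

abbrev IsNormalWord (N : List Γ → List Γ) (w : List Γ) : Prop :=
  w.IsChain fun x y => N [x, y] = [x, y]

variable {N : List Γ → List Γ} {e : Γ} (H : IsHomeNormalisation N e)
include H

namespace IsHomeNormalisation

theorem N_nil : N [] = [] := List.eq_nil_of_length_eq_zero (H.length_eq [])

theorem exists_N_pair_eq (x y : Γ) : ∃ a b, N [x, y] = [a, b] :=
  List.length_eq_two.1 (H.length_eq _)

theorem N_ne_nil {w : List Γ} (hw : w ≠ []) : N w ≠ [] :=
  List.ne_nil_of_length_pos (H.length_eq w ▸ List.length_pos_of_ne_nil hw)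

theorem N_N_append (u v : List Γ) : N (N u ++ v) = N (u ++ v) := by
  rcases eq_or_ne u [] with rfl | hu
  · rw [H.N_nil]
  · simpa using H.absorb [] u v hu

theorem N_N (w : List Γ) : N (N w) = N w := by
  simpa using H.N_N_append w []

theorem N_eq_self {w : List Γ} (hw : IsNormalWord N w) : N w = w := by
  rcases eq_or_ne w [] with rfl | hw'
  · exact H.N_nil
  · exact (H.eq_self_iff w hw').2 hw

theorem isNormalWord_N (w : List Γ) : IsNormalWord N (N w) := by
  rcases eq_or_ne (N w) [] with h | h
  · rw [h]; exact .nil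
  · exact (H.eq_self_iff _ h).1 (H.N_N w)

theorem N_pair_unit (x : Γ) : N [x, e] = [e, x] := by
  simpa [H.singleton] using (H.unit [x] (List.cons_ne_nil _ _)).2

theorem unit_not_mem_of_isNormalWord_cons {x : Γ} {t : List Γ} (ht : IsNormalWord N (x :: t))
    (hx : x ≠ e) : e ∉ x :: t := by
  induction t generalizing x with
  | nil => simpa using hx.symm
  | cons y t ih =>
    obtain ⟨hxy, ht⟩ := List.isChain_cons_cons.1 ht
    have hy : y ≠ e := by
      rintro rfl
      exact hx (List.cons.inj (H.N_pair_unit x ▸ hxy)).1.symm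
    simpa [Ne.symm hx] using ih ht hy

theorem unit_not_mem_dropWhile [DecidableEq Γ] {w : List Γ} (hw : IsNormalWord N w) :
    e ∉ w.dropWhile (· == e) := by
  induction w with
  | nil => simp
  | cons x t ih =>
    by_cases hx : x = e
    · simpa [hx] using ih hw.tail
    · simpa [hx] using H.unit_not_mem_of_isNormalWord_cons hw hx

theorem N_append_of_forall_eq_unit {X w : List Γ} (hX : ∀ x ∈ X, x = e) (hw : w ≠ []) :
    N (X ++ w) = X ++ N w := by
  induction X with
  | nil => rfl
  | cons x X ih =>
    obtain rfl := hX x List.mem_cons_self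
    rw [List.cons_append, (H.unit _ (by simp [hw])).1,
      ih fun y hy => hX y (List.mem_cons_of_mem _ hy), List.cons_append]

theorem N_triple_of_pair_eq_self {x y z c r : Γ} (hxy : N [x, y] = [x, y])
    (hyz : N [y, z] = [c, r]) : N [x, y, z] = N [x, c] ++ [r] := by
  simp [H.home, seqApplyL, applyAtL, hxy, hyz]

theorem N_cons_append_singleton {x a c : Γ} {t r : List Γ} (hv : IsNormalWord N (x :: t))
    (ht : N (t ++ [a]) = c :: r) : N (x :: (t ++ [a])) = N [x, c] ++ r := by
  induction t generalizing x c r with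
  | nil =>
    obtain ⟨rfl, rfl⟩ := List.cons_eq_cons.1 ((H.singleton a).symm.trans ht)
    simp
  | cons y t ih =>
    obtain ⟨hxy, hy⟩ := List.isChain_cons_cons.1 hv
    obtain ⟨b, s, hb⟩ := List.exists_cons_of_ne_nil (H.N_ne_nil (List.concat_ne_nil a t))
    obtain ⟨c₀, r₀, hyb⟩ := H.exists_N_pair_eq y b
    obtain ⟨rfl, rfl⟩ : c = c₀ ∧ r = r₀ :: s := by
      rw [List.cons_append, ih hy hb, hyb] at ht
      simpa [eq_comm] using ht
    -- By (home) the first three letters form the normal word `N [x, y, b]`.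
    have hnormal : IsNormalWord N (N [x, c] ++ r₀ :: s) :=
      List.isChain_split.2 ⟨H.N_triple_of_pair_eq_self hxy hyb ▸ H.isNormalWord_N _,
        (ht ▸ H.isNormalWord_N _).tail⟩
    calc N (x :: (y :: t ++ [a])) = N ([x] ++ N (y :: t ++ [a]) ++ []) := by
          simpa using (H.absorb [x] (y :: t ++ [a]) [] (by simp)).symm
      _ = N ([] ++ N [x, c] ++ r₀ :: s) := by
          rw [ht, H.absorb _ _ _ (by simp)]
          simp
      _ = N [x, c] ++ r₀ :: s := by simpa using H.N_eq_self hnormal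

theorem rtake_N_append_singleton {d w : List Γ} (a : Γ) (hv : IsNormalWord N (d ++ w)) :
    (N (d ++ w ++ [a])).rtake w.length = (N (w ++ [a])).rtake w.length := by
  induction d with
  | nil => rfl
  | cons x d ih =>
    rw [List.cons_append] at hv
    obtain ⟨c, r, hcr⟩ := List.exists_cons_of_ne_nil (H.N_ne_nil (List.concat_ne_nil a (d ++ w)))
    have hr : w.length ≤ r.length := by
      have := H.length_eq (d ++ w ++ [a])
      simp only [hcr, List.length_cons, List.length_append] at this
      omega
    rw [List.cons_append, List.cons_append, H.N_cons_append_singleton hv hcr, ← ih hv.tail, hcr,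
      List.rtake_append_of_le_length _ hr, ← List.singleton_append,
      List.rtake_append_of_le_length _ hr]

end IsHomeNormalisation

end Normalisation

theorem conGen_presRel_ofList_of_forall_eq {Γ : Type} {N : List Γ → List Γ} {e : Γ} {X : List Γ}
    (hX : ∀ x ∈ X, x = e) : conGen (presRel N e) (.ofList X) 1 := by
  induction X with
  | nil => exact .refl _
  | cons x X ih =>
    obtain rfl := hX x List.mem_cons_self
    rw [FreeMonoid.ofList_cons, ← one_mul 1]
    exact (conGen _).mul (.of _ _ (.inr ⟨rfl, rfl⟩))
      (ih fun y hy => hX y (List.mem_cons_of_mem _ hy))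

section NormalForm

variable {Γ : Type} [DecidableEq Γ] (N : List Γ → List Γ) (e : Γ)

def normalForm (w : List Γ) : List Γ := (N w).dropWhile (· == e)

def truncatedNormalForm (n : ℕ) (w : List Γ) : List Γ := (normalForm N e w).rtake n

variable {N e}

theorem finite_range_truncatedNormalForm [Finite Γ] (n : ℕ) :
    (Set.range (truncatedNormalForm N e n)).Finite :=
  (List.finite_length_le Γ n).subset (Set.range_subset_iff.2 fun _ => List.length_rtake_le _ _)

theorem truncatedNormalForm_of_length_le {n : ℕ} {w : List Γ} (h : (normalForm N e w).length ≤ n) :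
    truncatedNormalForm N e n w = normalForm N e w :=
  List.rtake_of_length_le h

variable (H : IsHomeNormalisation N e)
include H

namespace IsHomeNormalisation

theorem isNormalWord_normalForm (w : List Γ) : IsNormalWord N (normalForm N e w) :=
  (H.isNormalWord_N w).suffix (List.dropWhile_suffix _)

theorem unit_not_mem_normalForm (w : List Γ) : e ∉ normalForm N e w :=
  H.unit_not_mem_dropWhile (H.isNormalWord_N w)

theorem normalForm_of_isNormalWord {w : List Γ} (hw : IsNormalWord N w) (he : e ∉ w) :
    normalForm N e w = w := by
  rw [normalForm, H.N_eq_self hw, List.dropWhile_beq_of_not_mem he]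

theorem normalForm_append_N (u : List Γ) {w : List Γ} (hw : w ≠ []) :
    normalForm N e (u ++ N w) = normalForm N e (u ++ w) := by
  simpa [normalForm] using congrArg (List.dropWhile (· == e)) (H.absorb u w [] hw)

theorem normalForm_append_unit (w : List Γ) : normalForm N e (w ++ [e]) = normalForm N e w := by
  rcases eq_or_ne w [] with rfl | hw
  · simp [normalForm, H.singleton, H.N_nil]
  · simp [normalForm, (H.unit w hw).2]

theorem normalForm_normalForm_append_singleton (y : List Γ) (a : Γ) :
    normalForm N e (normalForm N e y ++ [a]) = normalForm N e (y ++ [a]) := by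
  obtain ⟨X, hX, hy⟩ : ∃ X, (∀ x ∈ X, x = e) ∧ N y = X ++ normalForm N e y :=
    ⟨_, fun x hx => by simpa using List.mem_takeWhile_imp hx, List.takeWhile_append_dropWhile.symm⟩
  calc normalForm N e (normalForm N e y ++ [a])
      = (X ++ N (normalForm N e y ++ [a])).dropWhile (· == e) := by
        rw [List.dropWhile_append_of_pos (by simpa using hX), normalForm]
    _ = normalForm N e (y ++ [a]) := by
        rw [← H.N_append_of_forall_eq_unit hX (by simp), ← List.append_assoc, ← hy, H.N_N_append,
          normalForm]

theorem rtake_normalForm_rtake_append_singleton {v : List Γ} (hv : IsNormalWord N v) (n : ℕ)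
    (a : Γ) :
    (normalForm N e (v.rtake n ++ [a])).rtake n = (normalForm N e (v ++ [a])).rtake n := by
  rcases le_or_gt v.length n with hle | hlt
  · rw [List.rtake_of_length_le hle]
  obtain ⟨d, w, rfl, hw⟩ : ∃ d w, v = d ++ w ∧ v.rtake n = w :=
    ⟨_, _, (List.take_append_drop (v.length - n) v).symm, rfl⟩
  obtain rfl : n = w.length := hw ▸ (List.length_rtake_of_le_length hlt.le).symm
  have hnf (u : List Γ) := H.unit_not_mem_dropWhile (H.isNormalWord_N u)
  rw [hw, normalForm, normalForm, List.rtake_dropWhile (hnf _) (by simp [H.length_eq]),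
    List.rtake_dropWhile (hnf _) (by simp [H.length_eq]; omega), H.rtake_N_append_singleton a hv]

theorem truncatedNormalForm_truncatedNormalForm_append_singleton (n : ℕ) (y : List Γ) (a : Γ) :
    truncatedNormalForm N e n (truncatedNormalForm N e n y ++ [a]) =
      truncatedNormalForm N e n (y ++ [a]) := by
  rw [truncatedNormalForm, truncatedNormalForm, truncatedNormalForm,
    H.rtake_normalForm_rtake_append_singleton (H.isNormalWord_normalForm y),
    H.normalForm_normalForm_append_singleton]

theorem truncatedNormalForm_idem (n : ℕ) (y : List Γ) :
    truncatedNormalForm N e n (truncatedNormalForm N e n y) = truncatedNormalForm N e n y := by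
  have hs : (normalForm N e y).rtake n <:+ normalForm N e y := List.drop_suffix _ _
  rw [truncatedNormalForm, truncatedNormalForm,
    H.normalForm_of_isNormalWord ((H.isNormalWord_normalForm y).suffix hs)
      fun he => H.unit_not_mem_normalForm y (hs.subset he),
    List.rtake_of_length_le (List.length_rtake_le _ _)]

theorem truncatedNormalForm_truncatedNormalForm_append (n : ℕ) (u w : List Γ) :
    truncatedNormalForm N e n (truncatedNormalForm N e n u ++ w) =
      truncatedNormalForm N e n (u ++ w) := by
  induction w using List.reverseRecOn with
  | nil => simpa using H.truncatedNormalForm_idem n u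
  | append_singleton w a ih =>
    rw [← List.append_assoc,
      ← H.truncatedNormalForm_truncatedNormalForm_append_singleton n (_ ++ w), ih,
      H.truncatedNormalForm_truncatedNormalForm_append_singleton, List.append_assoc]

theorem truncatedNormalForm_append_of_presRel (n : ℕ) {x y : FreeMonoid Γ} (h : presRel N e x y)
    (u : List Γ) :
    truncatedNormalForm N e n (u ++ x.toList) = truncatedNormalForm N e n (u ++ y.toList) := by
  rcases h with ⟨hx, hy⟩ | ⟨hx, hy⟩
  · rw [truncatedNormalForm, truncatedNormalForm, hy, H.normalForm_append_N u hx]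
  · rw [hx, hy, truncatedNormalForm, truncatedNormalForm, H.normalForm_append_unit, List.append_nil]

theorem conGen_presRel_normalForm (w : FreeMonoid Γ) :
    conGen (presRel N e) w (.ofList (normalForm N e w.toList)) := by
  rcases eq_or_ne w.toList [] with hw | hw
  · obtain rfl : w = 1 := FreeMonoid.toList.injective hw
    rw [normalForm, FreeMonoid.toList_one, H.N_nil]
    exact (conGen _).refl _
  obtain ⟨X, hX, hN⟩ : ∃ X, (∀ x ∈ X, x = e) ∧ N w.toList = X ++ normalForm N e w.toList :=
    ⟨_, fun x hx => by simpa using List.mem_takeWhile_imp hx, List.takeWhile_append_dropWhile.symm⟩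
  have hw : conGen (presRel N e) w (.ofList (N w.toList)) := .of _ _ (.inl ⟨hw, rfl⟩)
  rw [hN, FreeMonoid.ofList_append] at hw
  rw [← one_mul (FreeMonoid.ofList _)]
  exact (conGen _).trans hw
    ((conGen _).mul (conGen_presRel_ofList_of_forall_eq hX) ((conGen _).refl _))

end IsHomeNormalisation

end NormalForm

theorem S1_residually_finite_general
    {Γ : Type} [Fintype Γ]
    (N : List Γ → List Γ) (e : Γ)
    (hlen : ∀ w : List Γ, (N w).length = w.length)
    (hone : ∀ x : Γ, N [x] = [x])
    (habs : ∀ u w v : List Γ, w ≠ [] → N (u ++ N w ++ v) = N (u ++ w ++ v))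
    (hquad₁ : ∀ w : List Γ, w ≠ [] →
      (N w = w ↔ ∀ p s : List Γ, ∀ x y : Γ, w = p ++ [x, y] ++ s → N [x, y] = [x, y]))
    (hunit : ∀ w : List Γ, w ≠ [] →
      N (e :: w) = e :: N w ∧ N (w ++ [e]) = e :: N w)
    (hhome : ∀ x y z : Γ,
      N [x, y, z] = seqApplyL (fun a b => N [a, b]) [1, 2, 1] [x, y, z] ∧
      N [x, y, z] = seqApplyL (fun a b => N [a, b]) [2, 1, 2, 1] [x, y, z]) :
    ResiduallyFinite (conGen (presRel N e)).Quotient := by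
  classical
  have H : IsHomeNormalisation N e :=
    { length_eq := hlen, singleton := hone, absorb := habs, unit := hunit
      eq_self_iff := fun w hw => (hquad₁ w hw).trans <| by
        rw [List.isChain_iff_forall_rel_of_append_cons_cons]
        simp only [List.append_assoc, List.cons_append, List.nil_append]
        exact ⟨fun h _ _ _ _ hw => h _ _ _ _ hw, fun h _ _ _ _ hw => h hw⟩
      home := fun x y z => (hhome x y z).1 }
  refine residuallyFinite_conGen_of_finite_retractions fun u v huv => ?_
  have hnf : normalForm N e u.toList ≠ normalForm N e v.toList := fun h =>
    huv ((H.conGen_presRel_normalForm u).trans (h ▸ (H.conGen_presRel_normalForm v).symm))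
  let n := max (normalForm N e u.toList).length (normalForm N e v.toList).length
  refine ⟨truncatedNormalForm N e n, finite_range_truncatedNormalForm n,
    H.truncatedNormalForm_truncatedNormalForm_append n,
    fun x y hxy => H.truncatedNormalForm_append_of_presRel n hxy, ?_⟩
  rwa [truncatedNormalForm_of_length_le (le_max_left _ _),
    truncatedNormalForm_of_length_le (le_max_right _ _)]

/-- Corollary `cor-resid`: any monoid with a quadratic normalisation
satisfying Conditions (unit) and (home) is residually finite. -/
theorem S1_residually_finite
    {Γ : Type} [Fintype Γ] [Nonempty Γ]
    (N : List Γ → List Γ) (e : Γ)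
    (hlen : ∀ w : List Γ, (N w).length = w.length)
    (hone : ∀ x : Γ, N [x] = [x])
    (habs : ∀ u w v : List Γ, w ≠ [] → N (u ++ N w ++ v) = N (u ++ w ++ v))
    (hquad₁ : ∀ w : List Γ, w ≠ [] →
      (N w = w ↔ ∀ p s : List Γ, ∀ x y : Γ, w = p ++ [x, y] ++ s → N [x, y] = [x, y]))
    (hquad₂ : ∀ w : List Γ, w ≠ [] →
      ∃ l : List ℕ, N w = seqApplyL (fun x y => N [x, y]) l w)
    (hunit : ∀ w : List Γ, w ≠ [] →
      N (e :: w) = e :: N w ∧ N (w ++ [e]) = e :: N w)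
    (hhome : ∀ x y z : Γ,
      N [x, y, z] = seqApplyL (fun a b => N [a, b]) [1, 2, 1] [x, y, z] ∧
      N [x, y, z] = seqApplyL (fun a b => N [a, b]) [2, 1, 2, 1] [x, y, z]) :
    ResiduallyFinite (conGen (presRel N e)).Quotient :=
  S1_residually_finite_general N e hlen hone habs hquad₁ hunit hhome

end Stmt5
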